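/- arXiv:2603.10000 — 5 statements merged into one kernel-verified Lean document; each statement's English description precedes it below -/
import Mathlib

section
/- Let n ≥ 2 and let V ⊂ ℝ^d be a finite vocabulary with r_min < ‖v‖₂ < r_max for all v ∈ V and ‖v − v'‖₂ > η for distinct v, v' ∈ V, with r_min > 0. Let (X^(1), p^(1)), …, (X^(M), p^(M)) ∈ ℝ^{d×n} × ℝ^{|V|} be pairs such that: the columns of each X^(i) lie in V; each X^(i) has pairwise distinct columns; the column sets {X^(i)_{:,1}, …, X^(i)_{:,n}} are pairwise distinct across i ∈ [M]; and each label p^(i) is a strictly positive probability vector (p^(i)_k > 0 for all k and Σ_k p^(i)_k = 1). Then there exist a single-head masked softmax self-attention layer F_SA : ℝ^{d×n} → ℝ^{d×n} and a two-layer ReLU feed-forward network f : ℝ^d → ℝ^{|V|} of hidden width at most (2M + d)|V| such that for every i ∈ [M], σ_S( f( F_SA(X^(i))_{:,n} ) ) = p^(i), where σ_S is the softmax function on ℝ^{|V|}. That is, a one-block Transformer with a single attention head exactly memorizes the M history–distribution pairs. -/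
/-! Pick a linear functional `a` injective on `V ∪ {0}` and rank-one attention weights built from
`a`. The last output column of `X^(i)` is then `x + c_i • ε • a`, where `x` is its last token and
`c_i` is the mean of the scores `{a ⬝ᵥ v | v a token of X^(i)}` under the Gibbs weights
`exp (t (a ⬝ᵥ x) α)`. The logarithmic primitive of a Gibbs mean is the log of the exponential sum
`∑ α, exp (s α)`, which determines the finite set, and at `s = 0` that sum is the size of the
set; hence the Gibbs means of two distinct sets of the same size are distinct analytic functions,
and a generic `t` separates histories ending in the same token, while a generic `ε` keeps the
others apart. A second functional maps the `M` outputs to distinct reals, on which a ReLU layer of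
width `M` (lower triangular after sorting) interpolates `log p^(i)` exactly, and `softmax ∘ log`
is the identity on positive probability vectors. -/

open Finset

/-- The `k`-th column of a `d × n` matrix, viewed as a vector of `EuclideanSpace ℝ (Fin d)`
(so that `‖·‖` is the Euclidean norm). -/
noncomputable def col {d n : ℕ} (Z : Matrix (Fin d) (Fin n) ℝ) (k : Fin n) :
    EuclideanSpace ℝ (Fin d) := WithLp.toLp 2 (fun a => Z a k)

/-- Single-head masked (causal) softmax self-attention with head size `1`. -/
noncomputable def FSA {d n : ℕ}
    (WO : Matrix (Fin d) (Fin 1) ℝ) (WV WK WQ : Matrix (Fin 1) (Fin d) ℝ)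
    (Z : Matrix (Fin d) (Fin n) ℝ) : Matrix (Fin d) (Fin n) ℝ :=
  fun a k => Z a k + WO a 0 *
    ∑ l ∈ univ.filter (fun l => l ≤ k),
      (Real.exp ((WK * Z) 0 l * (WQ * Z) 0 k) /
          ∑ l' ∈ univ.filter (fun l' => l' ≤ k), Real.exp ((WK * Z) 0 l' * (WQ * Z) 0 k)) *
        (WV * Z) 0 l

/-- A two-layer ReLU feed-forward network `x ↦ W² σ_R(W¹ x + b¹) + b²` of hidden width `w`. -/
noncomputable def FFN {d K w : ℕ} (W1 : Matrix (Fin w) (Fin d) ℝ) (b1 : Fin w → ℝ)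
    (W2 : Matrix (Fin K) (Fin w) ℝ) (b2 : Fin K → ℝ) (x : Fin d → ℝ) : Fin K → ℝ :=
  W2.mulVec (fun j => max ((W1.mulVec x + b1) j) 0) + b2

/-- Softmax on `ℝ^K`. -/
noncomputable def softmax {K : ℕ} (z : Fin K → ℝ) : Fin K → ℝ :=
  fun i => Real.exp (z i) / ∑ j, Real.exp (z j)

open Filter Topology
open scoped Matrix

lemma exists_injOn_dotProduct {ι K : Type*} [Fintype ι] [Field K] [Infinite K]
    {s : Set (ι → K)} (hs : s.Finite) : ∃ a : ι → K, s.InjOn (a ⬝ᵥ ·) := by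
  classical
  have := hs.to_subtype
  obtain ⟨f, hf⟩ := Module.exists_dual_forall_apply_ne_zero (K := K)
    (fun p : {p : s × s // p.1 ≠ p.2} => (p.1.1 : ι → K) - p.1.2)
    (fun p => sub_ne_zero.mpr (Subtype.coe_injective.ne p.2))
  have hf_eq : ∀ z, f z = (fun i => f fun j => if i = j then 1 else 0) ⬝ᵥ z := fun z => by
    rw [f.pi_apply_eq_sum_univ, dotProduct_comm]
    rfl
  refine ⟨fun i => f fun j => if i = j then 1 else 0,
    fun x hx y hy hxy => by_contra fun hne => ?_⟩
  apply hf ⟨(⟨x, hx⟩, ⟨y, hy⟩), fun h => hne (congrArg Subtype.val h)⟩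
  show f (x - y) = 0
  rw [map_sub, sub_eq_zero, hf_eq, hf_eq]
  exact hxy

lemma exists_dotProduct_injOn_ne_zero {ι K : Type*} [Fintype ι] [Field K] [Infinite K]
    {s : Set (ι → K)} (hs : s.Finite) (h0 : 0 ∉ s) :
    ∃ a : ι → K, s.InjOn (a ⬝ᵥ ·) ∧ ∀ v ∈ s, a ⬝ᵥ v ≠ 0 := by
  obtain ⟨a, ha⟩ := exists_injOn_dotProduct (hs.insert 0)
  refine ⟨a, ha.mono (Set.subset_insert 0 s), fun v hv hav => h0 ?_⟩
  rwa [← ha (Set.mem_insert_of_mem 0 hv) (Set.mem_insert 0 s) (hav.trans (dotProduct_zero a).symm)]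

lemma eventually_cofinite_add_smul_ne_zero {K E : Type*} [Field K] [AddCommGroup E] [Module K E]
    {u w : E} (h : u ≠ 0 ∨ w ≠ 0) : ∀ᶠ ε : K in cofinite, u + ε • w ≠ 0 := by
  refine Filter.eventually_cofinite.2 (Set.Subsingleton.finite fun ε₁ h₁ ε₂ h₂ => ?_)
  simp only [Set.mem_ofPred_eq, not_not] at h₁ h₂
  have : (ε₁ - ε₂) • w = 0 := by linear_combination (norm := module) h₁ - h₂
  rcases smul_eq_zero.1 this with h' | hw
  · exact sub_eq_zero.1 h'
  · simp_all

lemma exists_injective_add_smul_smul {ι K E : Type*} [Finite ι] [Field K] [Infinite K]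
    [AddCommGroup E] [Module K E] (y : ι → E) (c : ι → K) {w : E}
    (h : ∀ i j, i ≠ j → y i = y j → c i • w ≠ c j • w) :
    ∃ ε : K, Function.Injective fun i => y i + c i • ε • w := by
  have key : ∀ i j, ∀ᶠ ε : K in cofinite, i ≠ j → y i + c i • ε • w ≠ y j + c j • ε • w := by
    intro i j
    by_cases hij : i = j
    · exact Eventually.of_forall fun _ h => absurd hij h
    have hne : y i - y j ≠ 0 ∨ (c i - c j) • w ≠ 0 := by
      by_cases hy : y i = y j
      · exact .inr (by rw [sub_smul]; exact sub_ne_zero.2 (h i j hij hy))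
      · exact .inl (sub_ne_zero.2 hy)
    filter_upwards [eventually_cofinite_add_smul_ne_zero hne] with ε hε _ heq
    apply hε
    linear_combination (norm := module) heq
  obtain ⟨ε, hε⟩ := (eventually_all.2 fun i => eventually_all.2 (key i)).exists
  exact ⟨ε, fun i j hij => by_contra fun hne => hε i j hne hij⟩

instance codiscrete_neBot {X : Type*} [TopologicalSpace X] [PerfectSpace X] [Nonempty X] :
    (codiscrete X).NeBot := by
  rw [neBot_iff, Ne, codiscrete, codiscreteWithin_eq_bot_iff, isDiscrete_univ_iff]
  intro h
  exact not_isOpen_singleton (Classical.arbitrary X) (isOpen_discrete _)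

lemma Finset.nonempty_of_ne_of_card_eq {α : Type*} {A B : Finset α} (hAB : A ≠ B)
    (hcard : A.card = B.card) : A.Nonempty := by
  rw [nonempty_iff_ne_empty]
  rintro rfl
  exact hAB (card_eq_zero.1 hcard.symm).symm

noncomputable def expSum (A : Finset ℝ) (s : ℝ) : ℝ := ∑ α ∈ A, Real.exp (s * α)

noncomputable def gibbsMean (A : Finset ℝ) (s : ℝ) : ℝ :=
  (∑ α ∈ A, α * Real.exp (s * α)) / expSum A s

lemma expSum_pos {A : Finset ℝ} (hA : A.Nonempty) (s : ℝ) : 0 < expSum A s :=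
  sum_pos (fun _ _ => Real.exp_pos _) hA

lemma expSum_zero (A : Finset ℝ) : expSum A 0 = A.card := by
  simp [expSum]

lemma hasDerivAt_log_expSum {A : Finset ℝ} (hA : A.Nonempty) (s : ℝ) :
    HasDerivAt (fun s => Real.log (expSum A s)) (gibbsMean A s) s := by
  have : HasDerivAt (expSum A) (∑ α ∈ A, α * Real.exp (s * α)) s := by
    refine HasDerivAt.fun_sum fun α _ => ?_
    simpa [mul_comm] using
      ((hasDerivAt_mul_const α).exp : HasDerivAt (fun s => Real.exp (s * α)) _ s)
  exact this.log (expSum_pos hA s).ne'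

lemma analyticAt_gibbsMean {A : Finset ℝ} (hA : A.Nonempty) (s : ℝ) :
    AnalyticAt ℝ (gibbsMean A) s := by
  have : AnalyticAt ℝ (fun s => ∑ α ∈ A, α * Real.exp (s * α)) s := by fun_prop
  exact this.div (by unfold expSum; fun_prop) (expSum_pos hA s).ne'

lemma tendsto_expSum_mul_exp_neg {A : Finset ℝ} {β : ℝ} (hβ : ∀ α ∈ A, α ≤ β) :
    Tendsto (fun s => expSum A s * Real.exp (-(s * β))) atTop (𝓝 (if β ∈ A then 1 else 0)) := by
  rw [← sum_ite_eq' A β fun _ => (1 : ℝ)]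
  simp only [expSum, sum_mul, ← Real.exp_add]
  refine tendsto_finsetSum _ fun α hα => ?_
  rcases (hβ α hα).eq_or_lt with rfl | hlt
  · simp
  · rw [if_neg hlt.ne]
    have : Tendsto (fun s : ℝ => s * (α - β)) atTop atBot :=
      tendsto_id.atTop_mul_const_of_neg (sub_neg.2 hlt)
    exact (Real.tendsto_exp_atBot.comp this).congr fun s => by
      simp only [Function.comp, mul_sub]
      ring_nf

lemma expSum_injective : Function.Injective expSum := by
  classical
  intro A B h
  by_contra hAB
  have hsdiff : expSum (A \ B) = expSum (B \ A) := funext fun s => by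
    have h1 := sum_inter_add_sum_sdiff A B fun α => Real.exp (s * α)
    have h2 := sum_inter_add_sum_sdiff B A fun α => Real.exp (s * α)
    have h3 := congrFun h s
    simp only [expSum, inter_comm B A] at *
    linarith
  have hne : (A \ B ∪ B \ A).Nonempty := by
    rw [nonempty_iff_ne_empty, Ne, union_eq_empty, sdiff_eq_empty_iff_subset,
      sdiff_eq_empty_iff_subset]
    exact fun h => hAB (h.1.antisymm h.2)
  -- Compare the leading exponential rates at the largest element of `A ∆ B`.
  obtain ⟨β, hβ, hmax⟩ : ∃ β ∈ A \ B ∪ B \ A, ∀ α ∈ A \ B ∪ B \ A, α ≤ β :=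
    ⟨_, max'_mem _ hne, le_max' _⟩
  have key := tendsto_nhds_unique
    (tendsto_expSum_mul_exp_neg fun α hα => hmax α (subset_union_left hα))
    (hsdiff ▸ tendsto_expSum_mul_exp_neg fun α hα => hmax α (subset_union_right hα))
  split_ifs at key <;> simp_all

lemma gibbsMean_ne_of_card_eq {A B : Finset ℝ} (hAB : A ≠ B) (hcard : A.card = B.card) :
    gibbsMean A ≠ gibbsMean B := by
  intro h
  have hA := nonempty_of_ne_of_card_eq hAB hcard
  have hB := nonempty_of_ne_of_card_eq hAB.symm hcard.symm
  have hderiv : ∀ s, HasDerivAt (fun s => Real.log (expSum A s) - Real.log (expSum B s)) 0 s :=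
    fun s => by simpa [h] using (hasDerivAt_log_expSum hA s).fun_sub (hasDerivAt_log_expSum hB s)
  have hconst : ∀ s, Real.log (expSum A s) - Real.log (expSum B s) = 0 := fun s => by
    rw [is_const_of_deriv_eq_zero (fun s => (hderiv s).differentiableAt)
      (fun s => (hderiv s).deriv) s 0]
    simp [expSum_zero, hcard]
  exact hAB (expSum_injective (funext fun s => Real.log_injOn_pos (expSum_pos hA s)
    (expSum_pos hB s) (sub_eq_zero.1 (hconst s))))

lemma eventually_gibbsMean_mul_ne {A B : Finset ℝ} (hAB : A ≠ B) (hcard : A.card = B.card)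
    {β : ℝ} (hβ : β ≠ 0) :
    ∀ᶠ t in codiscrete ℝ, gibbsMean A (t * β) ≠ gibbsMean B (t * β) := by
  have hA := nonempty_of_ne_of_card_eq hAB hcard
  have hB := nonempty_of_ne_of_card_eq hAB.symm hcard.symm
  have hanalytic : ∀ {C : Finset ℝ}, C.Nonempty →
      AnalyticOnNhd ℝ (fun t => gibbsMean C (t * β)) Set.univ := fun hC t _ =>
    (analyticAt_gibbsMean hC _).comp (by fun_prop)
  refine ((hanalytic hA).eqOn_or_eventually_ne_of_preconnected (hanalytic hB)
    isPreconnected_univ).resolve_left fun h => gibbsMean_ne_of_card_eq hAB hcard ?_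
  funext s
  simpa [div_mul_cancel₀ s hβ] using h (Set.mem_univ (s / β))

lemma softmax_log {K : ℕ} {p : Fin K → ℝ} (hp0 : ∀ i, 0 < p i) (hp1 : ∑ i, p i = 1) :
    softmax (fun i => Real.log (p i)) = p := by
  have hexp : ∀ i, Real.exp (Real.log (p i)) = p i := fun i => Real.exp_log (hp0 i)
  funext i
  simp only [softmax, hexp, hp1, div_one]

lemma FFN_replicateRow {d K w : ℕ} (a : Fin d → ℝ) (b : Fin w → ℝ)
    (W : Matrix (Fin K) (Fin w) ℝ) (x : Fin d → ℝ) :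
    FFN (Matrix.replicateRow (Fin w) a) (-b) W 0 x = W *ᵥ fun j => max (a ⬝ᵥ x - b j) 0 := by
  simp [FFN, Matrix.replicateRow_mulVec_eq_const, sub_eq_add_neg]

lemma exists_pos_le_sub_of_lt {ι : Type*} [Finite ι] (s : ι → ℝ) :
    ∃ δ > 0, ∀ i j, s i < s j → δ ≤ s j - s i := by
  have : ∀ i j, ∀ᶠ δ in 𝓝[>] (0 : ℝ), s i < s j → δ ≤ s j - s i := fun i j => by
    by_cases hij : s i < s j
    · filter_upwards [eventually_nhdsWithin_of_eventually_nhds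
        (eventually_le_nhds (sub_pos.2 hij))] with δ hδ using fun _ => hδ
    · exact Eventually.of_forall fun _ h => absurd h hij
  exact ((eventually_all.2 fun i => eventually_all.2 (this i)).and
    self_mem_nhdsWithin).exists.imp fun δ h => ⟨h.2, h.1⟩

lemma isUnit_det_relu_sub {M : ℕ} {s : Fin M → ℝ} (hs : Function.Injective s) {δ : ℝ}
    (hδ : 0 < δ) (hgap : ∀ i j, s i < s j → δ ≤ s j - s i) :
    IsUnit (Matrix.of fun i j => max (s i - (s j - δ)) 0).det := by
  set A := Matrix.of fun i j => max (s i - (s j - δ)) 0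
  set σ := Tuple.sort s
  have hlower : (A.submatrix σ σ).IsLowerTriangular := fun i j (hij : i < j) => by
    have hlt : s (σ i) < s (σ j) := (Tuple.monotone_sort s hij.le).lt_of_ne
      (hs.ne (σ.injective.ne hij.ne))
    have := hgap _ _ hlt
    simp only [Matrix.submatrix_apply, A, Matrix.of_apply]
    exact max_eq_right (by linarith)
  rw [← Matrix.det_submatrix_equiv_self σ, Matrix.det_of_isLowerTriangular _ hlower]
  simp [A, hδ.le, hδ.ne']

lemma exists_relu_interpolation {M : ℕ} {κ : Type*} {s : Fin M → ℝ} (hs : Function.Injective s)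
    (Y : Fin M → κ → ℝ) :
    ∃ (b : Fin M → ℝ) (W : Matrix κ (Fin M) ℝ), ∀ i, (W *ᵥ fun j => max (s i - b j) 0) = Y i := by
  obtain ⟨δ, hδ, hgap⟩ := exists_pos_le_sub_of_lt s
  set A := Matrix.of fun i j => max (s i - (s j - δ)) 0
  refine ⟨fun j => s j - δ, (A⁻¹ * Matrix.of Y)ᵀ, fun i => funext fun v => ?_⟩
  have := congrFun₂ (Matrix.mul_nonsing_inv_cancel_left A (Matrix.of Y)
    (isUnit_det_relu_sub hs hδ hgap)) i v
  simpa [Matrix.mulVec, dotProduct, Matrix.mul_apply, mul_comm, A] using this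

lemma FSA_replicate_transpose_of_forall_le {d n : ℕ} (u a : Fin d → ℝ) (t : ℝ)
    (Z : Matrix (Fin d) (Fin n) ℝ) (hinj : Function.Injective (a ᵥ* Z)) {k : Fin n}
    (hk : ∀ l, l ≤ k) :
    (FSA (Matrix.replicateCol (Fin 1) u) (Matrix.replicateRow (Fin 1) a)
      (Matrix.replicateRow (Fin 1) a) (Matrix.replicateRow (Fin 1) (t • a)) Z)ᵀ k =
      Zᵀ k + gibbsMean (univ.image (a ᵥ* Z)) (t * (a ᵥ* Z) k) • u := by
  have hrow : ∀ (v : Fin d → ℝ) l, (Matrix.replicateRow (Fin 1) v * Z) 0 l = (v ᵥ* Z) l :=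
    fun v l => by rw [← Matrix.replicateRow_vecMul, Matrix.replicateRow_apply]
  funext b
  simp only [FSA, Matrix.transpose_apply, filter_true_of_mem fun l _ => hk l, hrow,
    Matrix.smul_vecMul, Pi.smul_apply, smul_eq_mul, Matrix.replicateCol_apply, Pi.add_apply,
    gibbsMean, expSum, sum_image hinj.injOn]
  rw [sum_div, mul_comm (u b)]
  congr 2
  exact sum_congr rfl fun l _ => by ring_nf

lemma exists_forall_gibbsMean_mul_ne {ι : Type*} [Finite ι] (A : ι → Finset ℝ) (β : ι → ℝ)
    (hβ : ∀ i, β i ≠ 0) (hcard : ∀ i j, (A i).card = (A j).card)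
    (hA : ∀ i j, i ≠ j → A i ≠ A j) :
    ∃ t, ∀ i j, i ≠ j → β i = β j → gibbsMean (A i) (t * β i) ≠ gibbsMean (A j) (t * β j) := by
  have key : ∀ i j, ∀ᶠ t in codiscrete ℝ,
      i ≠ j → β i = β j → gibbsMean (A i) (t * β i) ≠ gibbsMean (A j) (t * β j) := by
    intro i j
    by_cases hij : i = j
    · exact Eventually.of_forall fun _ h => absurd hij h
    filter_upwards [eventually_gibbsMean_mul_ne (hA i j hij) (hcard i j) (hβ i)] with t ht _ hβij
    rwa [← hβij]
  exact (eventually_all.2 fun i => eventually_all.2 (key i)).exists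

lemma exists_FSA_injective_transpose {d n M : ℕ} (V : Finset (EuclideanSpace ℝ (Fin d)))
    (hV : 0 ∉ V) (X : Fin M → Matrix (Fin d) (Fin n) ℝ) {k : Fin n} (hk : ∀ l, l ≤ k)
    (hcols : ∀ i l, col (X i) l ∈ V) (hnodup : ∀ i, Function.Injective (col (X i)))
    (hdistinct : ∀ i j, i ≠ j → Set.range (col (X i)) ≠ Set.range (col (X j))) :
    ∃ (WO : Matrix (Fin d) (Fin 1) ℝ) (WV WK WQ : Matrix (Fin 1) (Fin d) ℝ),
      Function.Injective fun i => (FSA WO WV WK WQ (X i))ᵀ k := by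
  classical
  obtain ⟨a, ha_inj, ha_ne⟩ := exists_dotProduct_injOn_ne_zero (V.finite_toSet.image WithLp.ofLp)
    (by simpa using hV)
  set score : EuclideanSpace ℝ (Fin d) → ℝ := fun v => a ⬝ᵥ v.ofLp
  have hscore : Set.InjOn score V :=
    ha_inj.comp (WithLp.ofLp_injective 2).injOn (Set.mapsTo_image _ _)
  have hrange : ∀ i, Set.range (col (X i)) ⊆ V := fun i => Set.range_subset_iff.2 (hcols i)
  have hinj : ∀ i, Function.Injective (a ᵥ* X i) := fun i l l' h =>
    hnodup i (hscore (hcols i l) (hcols i l') h)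
  have hβ : ∀ i, (a ᵥ* X i) k ≠ 0 := fun i => ha_ne _ (Set.mem_image_of_mem _ (hcols i k))
  have hA : ∀ i j, i ≠ j → univ.image (a ᵥ* X i) ≠ univ.image (a ᵥ* X j) := fun i j hij h => by
    apply hdistinct i j hij
    rw [← hscore.image_eq_image_iff (hrange i) (hrange j), ← Set.range_comp, ← Set.range_comp]
    have := congrArg (fun A : Finset ℝ => (A : Set ℝ)) h
    simp only [coe_image, coe_univ, Set.image_univ] at this
    exact this
  have hcard : ∀ i j, (univ.image (a ᵥ* X i)).card = (univ.image (a ᵥ* X j)).card := by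
    simp [card_image_of_injective _ (hinj _)]
  obtain ⟨t, ht⟩ := exists_forall_gibbsMean_mul_ne _ _ hβ hcard hA
  obtain ⟨ε, hε⟩ := exists_injective_add_smul_smul (fun i => (X i)ᵀ k)
    (fun i => gibbsMean (univ.image (a ᵥ* X i)) (t * (a ᵥ* X i) k)) (w := a)
    fun i j hij hy h => by
      have ha0 : a ≠ 0 := fun ha0 => hβ i (by simp [ha0])
      exact ht i j hij (congrArg (a ⬝ᵥ ·) hy) (smul_left_injective ℝ ha0 h)
  refine ⟨Matrix.replicateCol (Fin 1) (ε • a), Matrix.replicateRow (Fin 1) a,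
    Matrix.replicateRow (Fin 1) a, Matrix.replicateRow (Fin 1) (t • a), ?_⟩
  convert hε using 2 with i
  exact FSA_replicate_transpose_of_forall_le _ _ _ _ (hinj i) hk

/-- A one-block Transformer — a single-head masked softmax attention
layer followed by a two-layer ReLU network of hidden width at most `(2M + d)|V|` and a
softmax readout on the last column — exactly memorizes the `M` history–distribution
pairs `(X^(i), p^(i))`. -/
theorem transformer_memorization {d n M : ℕ} (hn : 2 ≤ n)
    (V : Finset (EuclideanSpace ℝ (Fin d)))
    (r_min r_max : ℝ) (hrmin : 0 < r_min)
    (hV1 : ∀ v ∈ V, r_min < ‖v‖ ∧ ‖v‖ < r_max)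
    (X : Fin M → Matrix (Fin d) (Fin n) ℝ)
    (p : Fin M → Fin V.card → ℝ)
    (hcols : ∀ i k, col (X i) k ∈ V)
    (hnodup : ∀ i, ∀ k l : Fin n, k ≠ l → col (X i) k ≠ col (X i) l)
    (hdistinct : ∀ i j : Fin M, i ≠ j → Set.range (col (X i)) ≠ Set.range (col (X j)))
    (hp0 : ∀ i v, 0 < p i v) (hp1 : ∀ i, ∑ v, p i v = 1) :
    ∃ (WO : Matrix (Fin d) (Fin 1) ℝ) (WV WK WQ : Matrix (Fin 1) (Fin d) ℝ)
      (w : ℕ) (_ : w ≤ (2 * M + d) * V.card)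
      (W1 : Matrix (Fin w) (Fin d) ℝ) (b1 : Fin w → ℝ)
      (W2 : Matrix (Fin V.card) (Fin w) ℝ) (b2 : Fin V.card → ℝ),
      ∀ i : Fin M,
        softmax (FFN W1 b1 W2 b2
            (col (FSA WO WV WK WQ (X i)) ⟨n - 1, by omega⟩)) = p i := by
  have hlast : ∀ l : Fin n, l ≤ ⟨n - 1, by omega⟩ := fun l => Fin.le_def.2 (by simp; omega)
  have hV : 0 ∉ V := fun h0 => by simpa using hrmin.trans (hV1 0 h0).1
  obtain ⟨WO, WV, WK, WQ, hattn⟩ := exists_FSA_injective_transpose V hV X hlast hcols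
    (fun i k l h => by_contra fun hkl => hnodup i k l hkl h) hdistinct
  obtain ⟨a, ha⟩ := exists_injOn_dotProduct (Set.finite_range fun i => (FSA WO WV WK WQ (X i))ᵀ _)
  obtain ⟨b, W, hW⟩ := exists_relu_interpolation
    (fun i j h => hattn (ha (Set.mem_range_self i) (Set.mem_range_self j) h))
    fun i v => Real.log (p i v)
  have hwidth : M ≤ (2 * M + d) * V.card := by
    rcases M.eq_zero_or_pos with rfl | hM
    · simp
    · have := card_pos.2 ⟨_, hcols ⟨0, hM⟩ ⟨0, by omega⟩⟩
      nlinarith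
  refine ⟨WO, WV, WK, WQ, M, hwidth, Matrix.replicateRow (Fin M) a, -b, W, 0, fun i => ?_⟩
  rw [FFN_replicateRow]
  exact (congrArg softmax (hW i)).trans (softmax_log (hp0 i) (hp1 i))
end

section
/- Let Θ be a nonempty finite set, θ* ∈ Θ, and let m ≥ 1, n ≥ 1 be integers, φ ≥ 0, c ≥ 1. Let π : Θ → ℝ>0 be a prior with π(θ₁)/π(θ₂) ≤ c for all θ₁, θ₂ ∈ Θ. Let g₀, g₁, …, g_m : Θ → ℝ≥0 be likelihood functions with g_i(θ*) > 0 for every i. Let w : Θ → ℝ≥0 (the joint weight of the ICL prompt with each task) satisfy w(θ) ≤ e^{nmφ} π(θ) Π_{i=0}^{m} g_i(θ) for every θ ∈ Θ, and w(θ*) ≥ e^{−nmφ} π(θ*) Π_{i=0}^{m} g_i(θ*) > 0. Then Σ_{θ ≠ θ*} w(θ) / w(θ*) ≤ e^{2nmφ} c^m Π_{i=0}^{m} [ ( Σ_{θ ≠ θ*} π(θ) g_i(θ) ) / ( π(θ*) g_i(θ*) ) ]. Equivalently, writing A_i := Σ_{θ ≠ θ*} π(θ)g_i(θ) / Σ_{θ}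 π(θ)g_i(θ) for the ambiguity of the i-th component at θ*, the posterior odds against θ* under the full prompt are at most e^{2nmφ} c^m Π_{i=0}^{m} A_i / (1 − A_i). -/
/-!
Bound the numerator by `e^{nmφ} ∑_{θ ≠ θ*} π θ ∏ᵢ gᵢ θ` and the denominator from below by
`e^{-nmφ} π θ* ∏ᵢ gᵢ θ*`. Balancedness of the prior gives `1 / π θ ≤ c / π θ*`, so
`π θ ∏ᵢ gᵢ θ ≤ (c / π θ*)^m ∏ᵢ (π θ gᵢ θ)`, and a sum of products of nonnegative terms is at most
the product of the sums.
-/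

open Finset

theorem Finset.sum_prod_le_prod_sum {ι κ R : Type*} [CommSemiring R] [PartialOrder R]
    [IsOrderedRing R] {s : Finset ι} (hs : s.Nonempty) (t : Finset κ) (f : ι → κ → R)
    (hf : ∀ i ∈ s, ∀ k ∈ t, 0 ≤ f i k) :
    ∑ k ∈ t, ∏ i ∈ s, f i k ≤ ∏ i ∈ s, ∑ k ∈ t, f i k := by
  classical
  obtain ⟨a, ha⟩ := hs
  have hfa : ∀ k ∈ t, 0 ≤ f a k := hf a ha
  have hrest : ∀ i ∈ s.erase a, ∀ k ∈ t, 0 ≤ f i k := fun i hi => hf i (mem_of_mem_erase hi)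
  calc ∑ k ∈ t, ∏ i ∈ s, f i k
      = ∑ k ∈ t, f a k * ∏ i ∈ s.erase a, f i k :=
        sum_congr rfl fun k _ => (mul_prod_erase s (f · k) ha).symm
    _ ≤ ∑ k ∈ t, f a k * ∏ i ∈ s.erase a, ∑ k' ∈ t, f i k' :=
        sum_le_sum fun k hk => mul_le_mul_of_nonneg_left (prod_le_prod
          (fun i hi => hrest i hi k hk) fun i hi => single_le_sum (hrest i hi) hk) (hfa k hk)
    _ = ∏ i ∈ s, ∑ k ∈ t, f i k := by
        rw [← sum_mul, mul_prod_erase s (fun i => ∑ k ∈ t, f i k) ha]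

theorem mul_prod_le_div_pow_mul_prod_mul {m : ℕ} {a b c : ℝ} (ha : 0 < a) (hb : 0 < b)
    (hba : b / a ≤ c) {x : Fin (m + 1) → ℝ} (hx : ∀ i, 0 ≤ x i) :
    a * ∏ i, x i ≤ (c / b) ^ m * ∏ i, (a * x i) := by
  have hca : 1 ≤ c / b * a := by
    rwa [div_mul_eq_mul_div, one_le_div hb, ← div_le_iff₀ ha]
  have hprod : ∏ i, (a * x i) = a ^ m * (a * ∏ i, x i) := by
    rw [prod_mul_distrib, prod_const, card_univ, Fintype.card_fin, pow_succ, mul_assoc]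
  have hax : 0 ≤ a * ∏ i, x i := mul_nonneg ha.le (prod_nonneg fun i _ => hx i)
  calc a * ∏ i, x i ≤ (c / b * a) ^ m * (a * ∏ i, x i) :=
        le_mul_of_one_le_left hax (one_le_pow₀ hca)
    _ = (c / b) ^ m * ∏ i, (a * x i) := by rw [hprod, mul_pow, mul_assoc]

theorem sum_mul_prod_le_div_pow_mul_prod_sum {κ : Type*} {s : Finset κ} {m : ℕ} {a : κ → ℝ}
    {b c : ℝ} (ha : ∀ k ∈ s, 0 < a k) (hb : 0 < b) (hc : 0 ≤ c) (hba : ∀ k ∈ s, b / a k ≤ c)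
    {x : Fin (m + 1) → κ → ℝ} (hx : ∀ i, ∀ k ∈ s, 0 ≤ x i k) :
    ∑ k ∈ s, a k * ∏ i, x i k ≤ (c / b) ^ m * ∏ i, ∑ k ∈ s, a k * x i k :=
  calc ∑ k ∈ s, a k * ∏ i, x i k ≤ ∑ k ∈ s, (c / b) ^ m * ∏ i, (a k * x i k) :=
        sum_le_sum fun k hk =>
          mul_prod_le_div_pow_mul_prod_mul (ha k hk) hb (hba k hk) (hx · k hk)
    _ = (c / b) ^ m * ∑ k ∈ s, ∏ i, (a k * x i k) := (mul_sum _ _ _).symm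
    _ ≤ (c / b) ^ m * ∏ i, ∑ k ∈ s, a k * x i k := by
        gcongr
        exact sum_prod_le_prod_sum univ_nonempty _ _
          fun i _ k hk => mul_nonneg (ha k hk).le (hx i k hk)

theorem icl_posterior_odds_bound_general {Θ : Type*} [Fintype Θ] [DecidableEq Θ] (θs : Θ)
    (m n : ℕ) (φ c : ℝ)
    (π : Θ → ℝ) (hπ : ∀ θ, 0 < π θ) (hratio : ∀ θ₁ θ₂, π θ₁ / π θ₂ ≤ c)
    (g : Fin (m + 1) → Θ → ℝ) (hg0 : ∀ i θ, 0 ≤ g i θ) (hgs : ∀ i, 0 < g i θs)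
    (w : Θ → ℝ)
    (hwub : ∀ θ, w θ ≤ Real.exp ((n : ℝ) * m * φ) * π θ * ∏ i, g i θ)
    (hwlb : Real.exp (-((n : ℝ) * m * φ)) * π θs * ∏ i, g i θs ≤ w θs) :
    (∑ θ ∈ univ.erase θs, w θ) / w θs ≤
      Real.exp (2 * (n : ℝ) * m * φ) * c ^ m *
        ∏ i, (∑ θ ∈ univ.erase θs, π θ * g i θ) / (π θs * g i θs) := by
  set e := Real.exp ((n : ℝ) * m * φ)
  have hc : 0 ≤ c := zero_le_one.trans <| by
    simpa only [div_self (hπ θs).ne'] using hratio θs θs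
  have hnum : ∑ θ ∈ univ.erase θs, w θ ≤
      e * ((c / π θs) ^ m * ∏ i, ∑ θ ∈ univ.erase θs, π θ * g i θ) := calc
    ∑ θ ∈ univ.erase θs, w θ ≤ e * ∑ θ ∈ univ.erase θs, π θ * ∏ i, g i θ := by
      rw [mul_sum]
      exact sum_le_sum fun θ _ => (hwub θ).trans_eq (mul_assoc _ _ _)
    _ ≤ _ := by
      gcongr
      exact sum_mul_prod_le_div_pow_mul_prod_sum (fun θ _ => hπ θ) (hπ θs) hc
        (fun θ _ => hratio θs θ) fun i θ _ => hg0 i θ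
  have hden : e⁻¹ * π θs * ∏ i, g i θs ≤ w θs := by rwa [← Real.exp_neg]
  have hS : 0 ≤ ∏ i, ∑ θ ∈ univ.erase θs, π θ * g i θ :=
    prod_nonneg fun i _ => sum_nonneg fun θ _ => mul_nonneg (hπ θ).le (hg0 i θ)
  have hP : 0 < ∏ i, g i θs := prod_pos fun i _ => hgs i
  have hπs := hπ θs
  have he2 : Real.exp (2 * (n : ℝ) * m * φ) = e * e := by rw [← Real.exp_add]; ring_nf
  calc (∑ θ ∈ univ.erase θs, w θ) / w θs
      ≤ e * ((c / π θs) ^ m * ∏ i, ∑ θ ∈ univ.erase θs, π θ * g i θ) /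
          (e⁻¹ * π θs * ∏ i, g i θs) := div_le_div₀ (by positivity) hnum (by positivity) hden
    _ = _ := by
      rw [he2, div_pow, prod_div_distrib, prod_mul_distrib, prod_const, card_univ,
        Fintype.card_fin]
      field_simp
      ring

/-- Posterior-odds bound for In-Context Learning: under a `c`-balanced
prior, nearly-Markov distortion `e^{±nmφ}`, and componentwise likelihoods `g₀, …, g_m`,
the posterior odds against the true task `θ*` under the full ICL prompt are bounded by
`e^{2nmφ} c^m` times the product of the componentwise odds against `θ*`. -/
theorem icl_posterior_odds_bound {Θ : Type*} [Fintype Θ] [DecidableEq Θ] (θs : Θ)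
    (m n : ℕ) (hm : 1 ≤ m) (hn : 1 ≤ n) (φ c : ℝ) (hφ : 0 ≤ φ) (hc : 1 ≤ c)
    (π : Θ → ℝ) (hπ : ∀ θ, 0 < π θ) (hratio : ∀ θ₁ θ₂, π θ₁ / π θ₂ ≤ c)
    (g : Fin (m + 1) → Θ → ℝ) (hg0 : ∀ i θ, 0 ≤ g i θ) (hgs : ∀ i, 0 < g i θs)
    (w : Θ → ℝ) (hw0 : ∀ θ, 0 ≤ w θ)
    (hwub : ∀ θ, w θ ≤ Real.exp ((n : ℝ) * m * φ) * π θ * ∏ i, g i θ)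
    (hwlb : Real.exp (-((n : ℝ) * m * φ)) * π θs * ∏ i, g i θs ≤ w θs)
    (hws : 0 < w θs) :
    (∑ θ ∈ univ.erase θs, w θ) / w θs ≤
      Real.exp (2 * (n : ℝ) * m * φ) * c ^ m *
        ∏ i, (∑ θ ∈ univ.erase θs, π θ * g i θ) / (π θs * g i θs) :=
  icl_posterior_odds_bound_general θs m n φ c π hπ hratio g hg0 hgs w hwub hwlb
end

section
/- Let Θ be a nonempty finite set, θ* ∈ Θ, m ≥ 1, n ≥ 1, r ≥ 0 integers, φ ≥ 0, c ≥ 1, δ ≥ 0. Let π : Θ → ℝ>0 satisfy π(θ₁)/π(θ₂) ≤ c for all θ₁, θ₂; let g₀, …, g_m : Θ → ℝ≥0 with g_i(θ*) > 0; and let w : Θ → ℝ≥0 satisfy w(θ) ≤ e^{nmφ} π(θ) Π_{i=0}^m g_i(θ) for all θ and w(θ*) ≥ e^{−nmφ} π(θ*) Π_{i=0}^m g_i(θ*) > 0. Set W := Σ_θ w(θ). Let f : Θ → [0,1] (the prompt-conditional response probabilities), let g ∈ [0,1] (the target task-conditional response probability) with |f(θ*) − g| ≤ e^{rφ} − 1,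 and let p̂ ∈ ℝ satisfy |p̂ − Σ_θ (w(θ)/W) f(θ)| ≤ δ. Then |p̂ − g| ≤ δ + (e^{rφ} − 1) + e^{2nmφ} c^m Π_{i=0}^{m} [ ( Σ_{θ ≠ θ*} π(θ) g_i(θ) ) / ( π(θ*) g_i(θ*) ) ]. This is the population-level form of the In-Context Learning theorem: the model's prediction differs from the target task distribution by the pretraining error δ, the nearly-Markov distortion e^{rφ} − 1, and an ambiguity term that decays multiplicatively in the number m of demonstrations. -/
open Finset

/-!
Write `p = w / ∑ w` for the posterior. Since `p` sums to one and `f` takes values in `[0, 1]`,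
the posterior mean of `f` is within the ambiguity `∑_{θ ≠ θ*} p θ` of `f θ*`, and the ambiguity
is at most the posterior odds `∑_{θ ≠ θ*} w θ / w θ*`. The sandwich on `w` bounds each odds term
by `e^{2nmφ}` times the ratio of the products `π θ ∏ᵢ gᵢ θ`; spending `c^m` on the prior ratio
splits this into `∏ᵢ π θ gᵢ θ / (π θ* gᵢ θ*)`, and summing over `θ ≠ θ*` such a product of
nonnegative factors is at most the product of the sums. The triangle inequality through the
posterior mean and `f θ*` then adds the pretraining error and the distortion `e^{rφ} - 1`.
-/

theorem div_le_exp_two_mul_mul_div {t x y u v : ℝ} (hx : 0 ≤ x) (hv : 0 < v)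
    (hxu : x ≤ Real.exp t * u) (hvy : Real.exp (-t) * v ≤ y) :
    x / y ≤ Real.exp (2 * t) * (u / v) := by
  calc x / y ≤ Real.exp t * u / (Real.exp (-t) * v) :=
        div_le_div₀ (hx.trans hxu) hxu (mul_pos (Real.exp_pos _) hv) hvy
    _ = Real.exp (2 * t) * (u / v) := by
        rw [Real.exp_neg, two_mul, Real.exp_add]
        field_simp

theorem mul_prod_div_mul_prod_le {m : ℕ} {p ps c : ℝ} {x xs : Fin (m + 1) → ℝ}
    (hp : 0 < p) (hps : 0 < ps) (hc : ps / p ≤ c) (hx : ∀ i, 0 ≤ x i) (hxs : ∀ i, 0 < xs i) :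
    (p * ∏ i, x i) / (ps * ∏ i, xs i) ≤ c ^ m * ∏ i, (p * x i) / (ps * xs i) := by
  have hq : 0 < p / ps := div_pos hp hps
  have hcq : 1 ≤ c * (p / ps) := by
    calc (1 : ℝ) = ps / p * (p / ps) := by field_simp
      _ ≤ c * (p / ps) := mul_le_mul_of_nonneg_right hc hq.le
  have hB : 0 ≤ (∏ i, x i) / ∏ i, xs i :=
    div_nonneg (prod_nonneg fun i _ => hx i) (prod_pos fun i _ => hxs i).le
  have hsplit : ∏ i, (p * x i) / (ps * xs i) = (p / ps) ^ (m + 1) * ((∏ i, x i) / ∏ i, xs i) := by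
    simp only [mul_div_mul_comm p, prod_mul_distrib, prod_const, card_univ, Fintype.card_fin,
      prod_div_distrib]
  calc (p * ∏ i, x i) / (ps * ∏ i, xs i) = p / ps * ((∏ i, x i) / ∏ i, xs i) :=
        mul_div_mul_comm _ _ _ _
    _ ≤ (c * (p / ps)) ^ m * (p / ps * ((∏ i, x i) / ∏ i, xs i)) :=
        le_mul_of_one_le_left (mul_nonneg hq.le hB) (one_le_pow₀ hcq)
    _ = c ^ m * ∏ i, (p * x i) / (ps * xs i) := by rw [hsplit]; ring

theorem sum_prod_fin_le_prod_sum {ι : Type*} {m : ℕ} (s : Finset ι) (a : Fin (m + 1) → ι → ℝ)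
    (ha : ∀ i θ, 0 ≤ a i θ) : ∑ θ ∈ s, ∏ i, a i θ ≤ ∏ i, ∑ θ ∈ s, a i θ := by
  calc ∑ θ ∈ s, ∏ i, a i θ = ∑ θ ∈ s, a 0 θ * ∏ i : Fin m, a i.succ θ := by
        simp only [Fin.prod_univ_succ]
    _ ≤ ∑ θ ∈ s, a 0 θ * ∏ i : Fin m, ∑ θ' ∈ s, a i.succ θ' := by
        refine sum_le_sum fun θ hθ => mul_le_mul_of_nonneg_left ?_ (ha 0 θ)
        exact prod_le_prod (fun i _ => ha _ θ)
          (fun i _ => single_le_sum (fun θ' _ => ha i.succ θ') hθ)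
    _ = ∏ i, ∑ θ ∈ s, a i θ := by rw [← sum_mul, Fin.prod_univ_succ]

section Posterior

variable {Θ : Type*} [Fintype Θ] [DecidableEq Θ]

theorem abs_sum_mul_sub_le_sum_erase (p f : Θ → ℝ) (θs : Θ) (hp0 : ∀ θ, 0 ≤ p θ)
    (hp1 : ∑ θ, p θ = 1) (hf : ∀ θ, 0 ≤ f θ ∧ f θ ≤ 1) :
    |∑ θ, p θ * f θ - f θs| ≤ ∑ θ ∈ univ.erase θs, p θ := by
  have hsum : ∑ θ, p θ * f θ - f θs = ∑ θ ∈ univ.erase θs, p θ * (f θ - f θs) := by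
    rw [sum_erase univ (by ring)]
    simp only [mul_sub, sum_sub_distrib, ← sum_mul, hp1, one_mul]
  rw [hsum]
  refine (abs_sum_le_sum_abs _ _).trans (sum_le_sum fun θ _ => ?_)
  have hdiff : |f θ - f θs| ≤ 1 :=
    abs_sub_le_iff.2 ⟨by linarith [hf θ, hf θs], by linarith [hf θ, hf θs]⟩
  rw [abs_mul, abs_of_nonneg (hp0 θ)]
  exact mul_le_of_le_one_right (hp0 θ) hdiff

theorem abs_sum_div_sum_mul_sub_le (w f : Θ → ℝ) (θs : Θ) (hw0 : ∀ θ, 0 ≤ w θ)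
    (hws : 0 < w θs) (hf : ∀ θ, 0 ≤ f θ ∧ f θ ≤ 1) :
    |∑ θ, (w θ / ∑ θ', w θ') * f θ - f θs| ≤ ∑ θ ∈ univ.erase θs, w θ / w θs := by
  have hle : w θs ≤ ∑ θ', w θ' := single_le_sum (fun θ _ => hw0 θ) (mem_univ θs)
  have hpos : 0 < ∑ θ', w θ' := hws.trans_le hle
  calc |∑ θ, (w θ / ∑ θ', w θ') * f θ - f θs|
      ≤ ∑ θ ∈ univ.erase θs, w θ / ∑ θ', w θ' :=
        abs_sum_mul_sub_le_sum_erase _ f θs (fun θ => div_nonneg (hw0 θ) hpos.le)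
          (by rw [← sum_div, div_self hpos.ne']) hf
    _ ≤ ∑ θ ∈ univ.erase θs, w θ / w θs :=
        sum_le_sum fun θ _ => div_le_div_of_nonneg_left (hw0 θ) hws hle


theorem sum_erase_div_le_exp_mul_pow_mul_prod_sum {m : ℕ} {t c : ℝ} (θs : Θ) (π : Θ → ℝ)
    (g : Fin (m + 1) → Θ → ℝ) (w : Θ → ℝ)
    (hπ : ∀ θ, 0 < π θ) (hratio : ∀ θ₁ θ₂, π θ₁ / π θ₂ ≤ c) (hg0 : ∀ i θ, 0 ≤ g i θ)
    (hgs : ∀ i, 0 < g i θs) (hw0 : ∀ θ, 0 ≤ w θ)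
    (hwub : ∀ θ, w θ ≤ Real.exp t * π θ * ∏ i, g i θ)
    (hwlb : Real.exp (-t) * π θs * ∏ i, g i θs ≤ w θs) :
    ∑ θ ∈ univ.erase θs, w θ / w θs ≤
      Real.exp (2 * t) * c ^ m * ∏ i, (∑ θ ∈ univ.erase θs, π θ * g i θ) / (π θs * g i θs) := by
  have hc : 0 ≤ c := zero_le_one.trans (by simpa [(hπ θs).ne'] using hratio θs θs)
  have hodds : ∀ θ, w θ / w θs ≤
      Real.exp (2 * t) * (c ^ m * ∏ i, (π θ * g i θ) / (π θs * g i θs)) := fun θ =>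
    (div_le_exp_two_mul_mul_div (hw0 θ) (mul_pos (hπ θs) (prod_pos fun i _ => hgs i))
      ((hwub θ).trans_eq (mul_assoc _ _ _)) ((mul_assoc _ _ _).symm.trans_le hwlb)).trans
      (mul_le_mul_of_nonneg_left
        (mul_prod_div_mul_prod_le (hπ θ) (hπ θs) (hratio θs θ) (hg0 · θ) hgs)
        (Real.exp_pos _).le)
  simp only [sum_div]
  refine (sum_le_sum fun θ _ => hodds θ).trans ?_
  rw [← mul_sum, ← mul_sum, mul_assoc]
  exact mul_le_mul_of_nonneg_left (mul_le_mul_of_nonneg_left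
    (sum_prod_fin_le_prod_sum _ _ fun i θ => div_nonneg (mul_nonneg (hπ θ).le (hg0 i θ))
      (mul_pos (hπ θs) (hgs i)).le) (pow_nonneg hc m)) (Real.exp_pos _).le

end Posterior

theorem icl_prediction_error_bound_general {Θ : Type*} [Fintype Θ] [DecidableEq Θ] (θs : Θ)
    (m n r : ℕ) (φ c δ : ℝ)
    (π : Θ → ℝ) (hπ : ∀ θ, 0 < π θ) (hratio : ∀ θ₁ θ₂, π θ₁ / π θ₂ ≤ c)
    (g : Fin (m + 1) → Θ → ℝ) (hg0 : ∀ i θ, 0 ≤ g i θ) (hgs : ∀ i, 0 < g i θs)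
    (w : Θ → ℝ) (hw0 : ∀ θ, 0 ≤ w θ)
    (hwub : ∀ θ, w θ ≤ Real.exp ((n : ℝ) * m * φ) * π θ * ∏ i, g i θ)
    (hwlb : Real.exp (-((n : ℝ) * m * φ)) * π θs * ∏ i, g i θs ≤ w θs)
    (hws : 0 < w θs)
    (f : Θ → ℝ) (hf : ∀ θ, 0 ≤ f θ ∧ f θ ≤ 1)
    (gtar : ℝ)
    (hclose : |f θs - gtar| ≤ Real.exp ((r : ℝ) * φ) - 1)
    (phat : ℝ)
    (hphat : |phat - ∑ θ, (w θ / ∑ θ', w θ') * f θ| ≤ δ) :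
    |phat - gtar| ≤ δ + (Real.exp ((r : ℝ) * φ) - 1) +
      Real.exp (2 * (n : ℝ) * m * φ) * c ^ m *
        ∏ i, (∑ θ ∈ univ.erase θs, π θ * g i θ) / (π θs * g i θs) := by
  have hambiguity := sum_erase_div_le_exp_mul_pow_mul_prod_sum θs π g w hπ hratio hg0 hgs hw0
    hwub hwlb
  rw [← mul_assoc, ← mul_assoc] at hambiguity
  have hmean := (abs_sum_div_sum_mul_sub_le w f θs hw0 hws hf).trans hambiguity
  calc |phat - gtar|
      ≤ |phat - ∑ θ, (w θ / ∑ θ', w θ') * f θ| + |∑ θ, (w θ / ∑ θ', w θ') * f θ - f θs|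
          + |f θs - gtar| :=
        (abs_sub_le _ (f θs) _).trans (add_le_add_left (abs_sub_le _ _ _) _)
    _ ≤ _ := by linarith

/-- Population-level In-Context Learning theorem: the model's
prediction `phat` differs from the target task-conditional response probability `g` by at
most the pretraining error `δ`, the nearly-Markov distortion `e^{rφ} - 1`, and an
ambiguity term `e^{2nmφ} c^m ∏ᵢ (odds against θ*)` that decays multiplicatively in the
number `m` of demonstrations. -/
theorem icl_prediction_error_bound {Θ : Type*} [Fintype Θ] [DecidableEq Θ] (θs : Θ)
    (m n r : ℕ) (hm : 1 ≤ m) (hn : 1 ≤ n) (φ c δ : ℝ)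
    (hφ : 0 ≤ φ) (hc : 1 ≤ c) (hδ : 0 ≤ δ)
    (π : Θ → ℝ) (hπ : ∀ θ, 0 < π θ) (hratio : ∀ θ₁ θ₂, π θ₁ / π θ₂ ≤ c)
    (g : Fin (m + 1) → Θ → ℝ) (hg0 : ∀ i θ, 0 ≤ g i θ) (hgs : ∀ i, 0 < g i θs)
    (w : Θ → ℝ) (hw0 : ∀ θ, 0 ≤ w θ)
    (hwub : ∀ θ, w θ ≤ Real.exp ((n : ℝ) * m * φ) * π θ * ∏ i, g i θ)
    (hwlb : Real.exp (-((n : ℝ) * m * φ)) * π θs * ∏ i, g i θs ≤ w θs)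
    (hws : 0 < w θs)
    (f : Θ → ℝ) (hf : ∀ θ, 0 ≤ f θ ∧ f θ ≤ 1)
    (gtar : ℝ) (hgtar : 0 ≤ gtar ∧ gtar ≤ 1)
    (hclose : |f θs - gtar| ≤ Real.exp ((r : ℝ) * φ) - 1)
    (phat : ℝ)
    (hphat : |phat - ∑ θ, (w θ / ∑ θ', w θ') * f θ| ≤ δ) :
    |phat - gtar| ≤ δ + (Real.exp ((r : ℝ) * φ) - 1) +
      Real.exp (2 * (n : ℝ) * m * φ) * c ^ m *
        ∏ i, (∑ θ ∈ univ.erase θs, π θ * g i θ) / (π θs * g i θs) :=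
  icl_prediction_error_bound_general θs m n r φ c δ π hπ hratio g hg0 hgs w hw0 hwub hwlb hws f hf
    gtar hclose phat hphat
end

section
/- Let Θ be a nonempty finite set, g : Θ → [0,1] a likelihood function, f : Θ → [0,1], and let π, π̃ : Θ → ℝ≥0 be two probability mass functions on Θ (Σ_θ π(θ) = Σ_θ π̃(θ) = 1). Assume Z := Σ_θ π(θ) g(θ) > 0 and Z̃ := Σ_θ π̃(θ) g(θ) > 0, and set 𝓜 := max(1/Z, 1/Z̃). Then | Σ_θ (π(θ) g(θ)/Z) f(θ) − Σ_θ (π̃(θ) g(θ)/Z̃) f(θ) | ≤ 𝓜 · Σ_{θ : g(θ) > 0} |π̃(θ) − π(θ)|. In the paper's notation: |q(Y | P) − q̃(Y | P)| ≤ 𝓜 Δ_P, where Δ_P is the prior mismatch Σ_{θ : q(P|θ) > 0} |q̃(θ) − q(θ)| between the pretraining prior and the inference-time prior over compositional tasks. -/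
open Finset

/- **Statement 12.** Prior-mismatch bound: the posterior mixtures under the pretraining
prior `π` and the inference-time prior `π̃` differ by at most
`𝓜 · Σ_{θ : g(θ) > 0} |π̃(θ) - π(θ)|`, where `𝓜 = max(1/Z, 1/Z̃)` bounds the
reciprocals of both marginal prompt probabilities.  In the paper's notation,
`|q(Y|P) - q̃(Y|P)| ≤ 𝓜 Δ_P`. -/
open Classical in
theorem prior_mismatch_bound {Θ : Type*} [Fintype Θ]
    (g f π π' : Θ → ℝ)
    (hg : ∀ θ, 0 ≤ g θ ∧ g θ ≤ 1) (hf : ∀ θ, 0 ≤ f θ ∧ f θ ≤ 1)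
    (hπ0 : ∀ θ, 0 ≤ π θ) (hπ1 : ∑ θ, π θ = 1)
    (hπ'0 : ∀ θ, 0 ≤ π' θ) (hπ'1 : ∑ θ, π' θ = 1)
    (hZ : 0 < ∑ θ, π θ * g θ) (hZ' : 0 < ∑ θ, π' θ * g θ) :
    |(∑ θ, (π θ * g θ / ∑ θ', π θ' * g θ') * f θ) -
        ∑ θ, (π' θ * g θ / ∑ θ', π' θ' * g θ') * f θ| ≤
      max (1 / ∑ θ, π θ * g θ) (1 / ∑ θ, π' θ * g θ) *
        ∑ θ ∈ univ.filter (fun θ => 0 < g θ), |π' θ - π θ| := by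
  set Z : ℝ := ∑ θ, π θ * g θ with hZdef
  set Z' : ℝ := ∑ θ, π' θ * g θ with hZ'def
  set A : ℝ := ∑ θ, π θ * g θ * f θ with hAdef
  set A' : ℝ := ∑ θ, π' θ * g θ * f θ with hA'def
  set c : ℝ := A' / Z' with hcdef
  have hA'0 : 0 ≤ A' :=
    Finset.sum_nonneg fun θ _ =>
      mul_nonneg (mul_nonneg (hπ'0 θ) (hg θ).1) (hf θ).1
  have hA'le : A' ≤ Z' :=
    Finset.sum_le_sum fun θ _ =>
      mul_le_of_le_one_right (mul_nonneg (hπ'0 θ) (hg θ).1) (hf θ).2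
  have hc0 : 0 ≤ c := div_nonneg hA'0 hZ'.le
  have hc1 : c ≤ 1 := (div_le_one hZ').mpr hA'le
  have hcZ' : c * Z' = A' := div_mul_cancel₀ A' hZ'.ne'
  have hL : (∑ θ, (π θ * g θ / Z) * f θ) = A / Z := by
    rw [hAdef, Finset.sum_div]
    exact Finset.sum_congr rfl fun θ _ => by ring
  have hL' : (∑ θ, (π' θ * g θ / Z') * f θ) = A' / Z' := by
    rw [hA'def, Finset.sum_div]
    exact Finset.sum_congr rfl fun θ _ => by ring
  have expand : ∑ θ, (π θ - π' θ) * g θ * (f θ - c) = A - c * Z - (A' - c * Z') := by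
    simp only [hAdef, hA'def, hZdef, hZ'def, Finset.mul_sum, ← Finset.sum_sub_distrib]
    exact Finset.sum_congr rfl fun θ _ => by ring
  have key : A / Z - A' / Z' = (∑ θ, (π θ - π' θ) * g θ * (f θ - c)) / Z := by
    rw [expand, hcZ', sub_self, sub_zero, sub_div, mul_div_assoc, div_self hZ.ne',
      mul_one, hcdef]
  have hbound : |∑ θ, (π θ - π' θ) * g θ * (f θ - c)| ≤
      ∑ θ ∈ univ.filter (fun θ => 0 < g θ), |π' θ - π θ| := by
    refine (Finset.abs_sum_le_sum_abs _ _).trans ?_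
    have hrestrict : ∑ θ, |(π θ - π' θ) * g θ * (f θ - c)| =
        ∑ θ ∈ univ.filter (fun θ => 0 < g θ), |(π θ - π' θ) * g θ * (f θ - c)| := by
      refine (Finset.sum_subset (Finset.filter_subset _ _) ?_).symm
      intro θ _ hθ
      simp only [Finset.mem_filter, Finset.mem_univ, true_and, not_lt] at hθ
      have : g θ = 0 := le_antisymm hθ (hg θ).1
      simp [this]
    rw [hrestrict]
    refine Finset.sum_le_sum fun θ _ => ?_
    have h1 : |g θ| ≤ 1 := by rw [abs_of_nonneg (hg θ).1]; exact (hg θ).2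
    have h2 : |f θ - c| ≤ 1 := by
      rw [abs_sub_le_iff]
      constructor <;> [linarith [(hf θ).1, (hf θ).2]; linarith [(hf θ).1, (hf θ).2]]
    calc |(π θ - π' θ) * g θ * (f θ - c)| = |π θ - π' θ| * |g θ| * |f θ - c| := by
            rw [abs_mul, abs_mul]
      _ ≤ |π θ - π' θ| * 1 * 1 := by
            apply mul_le_mul (mul_le_mul_of_nonneg_left h1 (abs_nonneg _)) h2
              (abs_nonneg _) (by positivity)
      _ = |π' θ - π θ| := by rw [mul_one, mul_one, abs_sub_comm]
  have hΔ0 : 0 ≤ ∑ θ ∈ univ.filter (fun θ => 0 < g θ), |π' θ - π θ| :=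
    Finset.sum_nonneg fun θ _ => abs_nonneg _
  rw [hL, hL', key, abs_div, abs_of_pos hZ]
  calc |∑ θ, (π θ - π' θ) * g θ * (f θ - c)| / Z
      ≤ (∑ θ ∈ univ.filter (fun θ => 0 < g θ), |π' θ - π θ|) / Z := by gcongr
    _ = (1 / Z) * ∑ θ ∈ univ.filter (fun θ => 0 < g θ), |π' θ - π θ| := by ring
    _ ≤ max (1 / Z) (1 / Z') * ∑ θ ∈ univ.filter (fun θ => 0 < g θ), |π' θ - π θ| :=
        mul_le_mul_of_nonneg_right (le_max_left _ _) hΔ0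
end

section
/- Let Θ be a nonempty finite set, let w : Θ → ℝ≥0 be a probability mass function on Θ (the posterior q(· | x) over latent tasks given a prompt x), let f : Θ → [0,1] (the task-conditional response probabilities q(y | x, ·)), let θ* ∈ Θ be a maximizer of w, and let p̂ ∈ ℝ satisfy |p̂ − Σ_θ w(θ) f(θ)| ≤ δ for some δ ≥ 0. Then |p̂ − f(θ*)| ≤ δ + (1 − w(θ*)); that is, the prediction error against the dominated inferred task's distribution is bounded by the pretraining error plus the task ambiguity A_Θ(x) = 1 − w(θ*). This is the population-level form of the zero-shot comprehension theorem. -/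
/-- Population-level zero-shot comprehension theorem: if `p̂` is within
`δ` of the posterior mixture `Σ_θ w(θ) f(θ)` and `θ*` maximizes the posterior `w`, then
`|p̂ - f(θ*)| ≤ δ + (1 - w(θ*))`, i.e. the prediction error against the dominated
inferred task's distribution is bounded by the pretraining error plus the task
ambiguity `A_Θ(x) = 1 - w(θ*)`. -/
theorem zero_shot_comprehension {Θ : Type*} [Fintype Θ]
    (w f : Θ → ℝ) (hw0 : ∀ θ, 0 ≤ w θ) (hw1 : ∑ θ, w θ = 1)
    (hf : ∀ θ, 0 ≤ f θ ∧ f θ ≤ 1)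
    (θs : Θ) (hmax : ∀ θ, w θ ≤ w θs)
    (phat δ : ℝ) (hδ : 0 ≤ δ)
    (hp : |phat - ∑ θ, w θ * f θ| ≤ δ) :
    |phat - f θs| ≤ δ + (1 - w θs) := by
  classical
  have key : |(∑ θ, w θ * f θ) - f θs| ≤ 1 - w θs := by
    have h1 : (∑ θ, w θ * f θ) - f θs = ∑ θ, w θ * (f θ - f θs) := by
      simp [mul_sub, Finset.sum_sub_distrib, ← Finset.sum_mul, hw1]
    rw [h1]
    calc |∑ θ, w θ * (f θ - f θs)| ≤ ∑ θ, |w θ * (f θ - f θs)| :=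
          Finset.abs_sum_le_sum_abs _ _
      _ ≤ ∑ θ, (if θ = θs then 0 else w θ) := by
          apply Finset.sum_le_sum
          intro θ _
          by_cases h : θ = θs
          · simp [h]
          · simp only [h, if_false, abs_mul, abs_of_nonneg (hw0 θ)]
            have : |f θ - f θs| ≤ 1 := by
              have := hf θ; have := hf θs
              rw [abs_le]; constructor <;> linarith
            nlinarith [hw0 θ]
      _ = 1 - w θs := by
          have h2 : ∀ θ, (if θ = θs then (0:ℝ) else w θ)
              = w θ - (if θ = θs then w θ else 0) := by
            intro θ; split <;> ring
          rw [Finset.sum_congr rfl fun θ _ => h2 θ, Finset.sum_sub_distrib, hw1,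
            Finset.sum_ite_eq' Finset.univ θs w]
          simp
  calc |phat - f θs| = |(phat - ∑ θ, w θ * f θ) + ((∑ θ, w θ * f θ) - f θs)| := by ring_nf
    _ ≤ |phat - ∑ θ, w θ * f θ| + |(∑ θ, w θ * f θ) - f θs| := abs_add_le _ _
    _ ≤ δ + (1 - w θs) := add_le_add hp key
end
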